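/- Let d, m ≥ 1, let U ≤ Sym(d) and V ≤ Sym(m), and let G ≤ Sym({1,…,d} × {1,…,m}) be the imprimitive wreath product U ≀ V, i.e., the group of all permutations π of the pairs (i,j) of the form π(i,j) = (u_j(i), v(j)) with v ∈ V and u_1,…,u_m ∈ U. Let N be a normal subgroup of U of index 2, and let E ∈ ℤ[X_1,…,X_d] be a U-relative N-invariant (Stab_U(E) = N) with the property that E^u = −E for all u ∈ U∖N. For 1 ≤ j ≤ m set d_j := E(X_{1,j},…,X_{d,j}) ∈ ℤ[X_{i,j} : 1≤i≤d, 1≤j≤m], and set F := d_1 ⋯ d_m. Then H := Stab_G(F) is a subgroup of index 2 in G; in particular F is a G-relative H-invariant for an index-2 subgroup H of G. -/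

import Mathlib

/-!
A permutation `(i, j) ↦ (u_j i, v j)` of the wreath product sends the block copy
`d_j = E(X_{·,j})` to `± d_{v j}`, the sign being `-1` exactly when `u_j ∉ N`. Hence every
element of `U ≀ V` sends `F = ∏ d_j` to `±F`, so `Stab(F)` is the kernel of a sign character;
the character is onto because acting by some `u₀ ∈ U ∖ N` in a single block flips `F`, and
`F ≠ -F` since `F ≠ 0` over `ℤ`.
-/

open MvPolynomial Equiv

section Rename

variable {σ R : Type*} [CommRing R]

theorem rename_mul_apply (a b : Perm σ) (F : MvPolynomial σ R) :
    rename (a * b) F = rename a (rename b F) := by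
  rw [Perm.coe_mul, rename_rename]

def renameStabilizer (F : MvPolynomial σ R) : Subgroup (Perm σ) where
  carrier := {g | rename g F = F}
  one_mem' := by simp
  mul_mem' {a b} ha hb := by
    simp only [Set.mem_ofPred_eq, rename_mul_apply] at *
    rw [hb, ha]
  inv_mem' {a} ha := by
    simp only [Set.mem_ofPred_eq] at *
    conv_lhs => rw [← ha]
    rw [rename_rename, ← Perm.coe_mul, inv_mul_cancel, Perm.coe_one, rename_id_apply]

@[simp]
theorem mem_renameStabilizer {F : MvPolynomial σ R} {g : Perm σ} :
    g ∈ renameStabilizer F ↔ rename g F = F :=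
  Iff.rfl

theorem relIndex_renameStabilizer_eq_two {G : Subgroup (Perm σ)} {F : MvPolynomial σ R}
    (hF : F ≠ -F) (hpm : ∀ g ∈ G, rename g F = F ∨ rename g F = -F)
    {π : Perm σ} (hπG : π ∈ G) (hπ : rename π F = -F) :
    (renameStabilizer F).relIndex G = 2 := by
  refine Subgroup.index_eq_two_iff.2 ⟨⟨π, hπG⟩, fun b => ?_⟩
  have hbπ : rename (b * π : Perm σ) F = -rename b F := by
    rw [rename_mul_apply, hπ, map_neg]
  simp only [Subgroup.mem_subgroupOf, Subgroup.coe_mul, mem_renameStabilizer, hbπ]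
  rcases hpm b b.2 with h | h <;> rw [h]
  · exact Or.inr ⟨rfl, hF.symm⟩
  · exact Or.inl ⟨neg_neg F, hF.symm⟩

end Rename

section Wreath

variable {ι κ R : Type*} [CommRing R]

def wreathPerm (u : κ → Perm ι) (v : Perm κ) : Perm (ι × κ) :=
  (prodComm ι κ).trans ((prodShear v u).trans (prodComm κ ι))

@[simp]
theorem wreathPerm_apply (u : κ → Perm ι) (v : Perm κ) (p : ι × κ) :
    wreathPerm u v p = (u p.2 p.1, v p.2) :=
  rfl

variable [Fintype κ]

noncomputable def blockProd (E : MvPolynomial ι R) : MvPolynomial (ι × κ) R :=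
  ∏ j, rename (fun i => (i, j)) E

theorem blockProd_ne_zero [IsDomain R] {E : MvPolynomial ι R} (hE : E ≠ 0) :
    (blockProd E : MvPolynomial (ι × κ) R) ≠ 0 :=
  Finset.prod_ne_zero_iff.2 fun _ _ =>
    (map_ne_zero_iff _ (rename_injective _ fun _ _ h => (Prod.mk.inj h).1)).2 hE

theorem rename_wreathPerm_blockProd (E : MvPolynomial ι R) (u : κ → Perm ι) (v : Perm κ)
    (c : κ → R) (hc : ∀ j, rename (u j) E = c j • E) :
    rename (wreathPerm u v) (blockProd E) = (∏ j, c j) • blockProd E := by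
  have hblock : ∀ j, rename (wreathPerm u v) (rename (fun i => (i, j)) E) =
      c j • rename (fun i => (i, v j)) E := fun j => by
    have hcomp : (wreathPerm u v ∘ fun i => (i, j)) = (fun i => (i, v j)) ∘ u j := rfl
    rw [rename_rename, hcomp, ← rename_rename, hc, map_smul]
  rw [blockProd, map_prod, Finset.prod_congr rfl fun j _ => hblock j, Finset.prod_smul,
    Equiv.prod_comp v fun j => rename (fun i => (i, j)) E]

theorem rename_wreathPerm_blockProd_eq_or_eq_neg {E : MvPolynomial ι R} {u : κ → Perm ι}
    (hu : ∀ j, rename (u j) E = E ∨ rename (u j) E = -E) (v : Perm κ) :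
    rename (wreathPerm u v) (blockProd E) = blockProd E ∨
      rename (wreathPerm u v) (blockProd E) = -blockProd E := by
  have hsign : ∀ j, ∃ c : R, (c = 1 ∨ c = -1) ∧ rename (u j) E = c • E := fun j =>
    (hu j).elim (fun h => ⟨1, .inl rfl, by rw [h, one_smul]⟩)
      (fun h => ⟨-1, .inr rfl, by rw [h, neg_one_smul]⟩)
  choose c hc₁ hc using hsign
  have hprod : ∏ j, c j = 1 ∨ ∏ j, c j = -1 :=
    Finset.prod_induction _ (fun a => a = 1 ∨ a = -1)
      (by rintro a b (rfl | rfl) (rfl | rfl) <;> simp) (.inl rfl) fun j _ => hc₁ j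
  rw [rename_wreathPerm_blockProd E u v c hc]
  rcases hprod with h | h <;> simp [h]

theorem rename_wreathPerm_mulSingle_blockProd [DecidableEq κ] {E : MvPolynomial ι R}
    {u₀ : Perm ι} (hu₀ : rename u₀ E = -E) (j₀ : κ) :
    rename (wreathPerm (Pi.mulSingle j₀ u₀) 1) (blockProd E) = -blockProd E := by
  have hc : ∀ j, rename ((Pi.mulSingle j₀ u₀ : κ → Perm ι) j) E =
      (Pi.mulSingle j₀ (-1) : κ → R) j • E := fun j => by
    rcases eq_or_ne j j₀ with rfl | hj
    · simp [hu₀]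
    · simp [hj]
  rw [rename_wreathPerm_blockProd E _ 1 _ hc, Fintype.prod_pi_mulSingle', neg_one_smul]

end Wreath

theorem statement10_general (d m : ℕ) (hm : 1 ≤ m)
    (U : Subgroup (Equiv.Perm (Fin d))) (V : Subgroup (Equiv.Perm (Fin m)))
    (G : Subgroup (Equiv.Perm (Fin d × Fin m)))
    (hG : ∀ π : Equiv.Perm (Fin d × Fin m), π ∈ G ↔
      ∃ (v : Equiv.Perm (Fin m)) (u : Fin m → Equiv.Perm (Fin d)),
        v ∈ V ∧ (∀ j, u j ∈ U) ∧ ∀ p : Fin d × Fin m, π p = (u p.2 p.1, v p.2))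
    (N : Subgroup (Equiv.Perm (Fin d)))
    (hNidx : N.relIndex U = 2)
    (E : MvPolynomial (Fin d) ℤ)
    (hE : ∀ u ∈ U, (rename (⇑u) E = E ↔ u ∈ N))
    (hEneg : ∀ u ∈ U, u ∉ N → rename (⇑u) E = -E) :
    ∃ H : Subgroup (Equiv.Perm (Fin d × Fin m)),
      H ≤ G ∧
      (∀ g : Equiv.Perm (Fin d × Fin m), g ∈ H ↔
        (g ∈ G ∧ rename (⇑g) (∏ j : Fin m, rename (fun i => (i, j)) E)
          = ∏ j : Fin m, rename (fun i => (i, j)) E)) ∧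
      H.relIndex G = 2 := by
  obtain ⟨u₀, hu₀U, hu₀N⟩ : ∃ u ∈ U, u ∉ N := by
    by_contra! h
    have := Subgroup.relIndex_eq_one.2 h
    omega
  have hE₀ : E ≠ 0 := fun h => hu₀N ((hE u₀ hu₀U).1 (by simp [h]))
  have hEpm : ∀ u ∈ U, rename u E = E ∨ rename u E = -E := fun u hu =>
    (em (u ∈ N)).imp (hE u hu).2 (hEneg u hu)
  have hGpm : ∀ g ∈ G, rename g (blockProd E) = blockProd E ∨
      rename g (blockProd E) = -blockProd E := by
    intro g hg
    obtain ⟨v, u, -, hu, hgp⟩ := (hG g).1 hg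
    obtain rfl : g = wreathPerm u v := Equiv.ext hgp
    exact rename_wreathPerm_blockProd_eq_or_eq_neg (fun j => hEpm _ (hu j)) v
  let j₀ : Fin m := ⟨0, hm⟩
  let π := wreathPerm (Pi.mulSingle j₀ u₀) 1
  have hπG : π ∈ G := (hG π).2 ⟨1, _, V.one_mem,
    fun j => by by_cases h : j = j₀ <;> simp [h, hu₀U, U.one_mem],
    fun _ => rfl⟩
  refine ⟨renameStabilizer (blockProd E) ⊓ G, inf_le_right,
    fun g => by rw [Subgroup.mem_inf, and_comm]; rfl, ?_⟩
  rw [Subgroup.inf_relIndex_right]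
  exact relIndex_renameStabilizer_eq_two
    (fun h => blockProd_ne_zero hE₀ (CharZero.eq_neg_self_iff.1 h)) hGpm hπG
    (rename_wreathPerm_mulSingle_blockProd (hEneg u₀ hu₀U hu₀N) _)

/-- Let `d, m ≥ 1`, `U ≤ Sym(d)`, `V ≤ Sym(m)`, and let
`G ≤ Sym({1,…,d} × {1,…,m})` be the imprimitive wreath product `U ≀ V`, i.e. the group of
all permutations `π` of the pairs `(i,j)` of the form `π(i,j) = (u_j(i), v(j))` with
`v ∈ V` and `u_1,…,u_m ∈ U`.  Let `N ⊴ U` be a normal subgroup of index 2 and let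
`E ∈ ℤ[X_1,…,X_d]` be a `U`-relative `N`-invariant (`Stab_U(E) = N`) with `E^u = −E` for
all `u ∈ U∖N`.  For each `j` set `d_j := E(X_{1,j},…,X_{d,j})` and `F := d_1 ⋯ d_m`.
Then `H := Stab_G(F)` is a subgroup of index 2 in `G`; in particular `F` is a
`G`-relative `H`-invariant for an index-2 subgroup `H` of `G`.  The action on
polynomials is `X_i ↦ X_{σ(i)}` (`MvPolynomial.rename σ`); indices are
`Subgroup.relindex`. -/
theorem statement10 (d m : ℕ) (hd : 1 ≤ d) (hm : 1 ≤ m)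
    (U : Subgroup (Equiv.Perm (Fin d))) (V : Subgroup (Equiv.Perm (Fin m)))
    (G : Subgroup (Equiv.Perm (Fin d × Fin m)))
    (hG : ∀ π : Equiv.Perm (Fin d × Fin m), π ∈ G ↔
      ∃ (v : Equiv.Perm (Fin m)) (u : Fin m → Equiv.Perm (Fin d)),
        v ∈ V ∧ (∀ j, u j ∈ U) ∧ ∀ p : Fin d × Fin m, π p = (u p.2 p.1, v p.2))
    (N : Subgroup (Equiv.Perm (Fin d)))
    (hNU : N ≤ U)
    (hNnormal : ∀ u ∈ U, ∀ x ∈ N, u * x * u⁻¹ ∈ N)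
    (hNidx : N.relIndex U = 2)
    (E : MvPolynomial (Fin d) ℤ)
    (hE : ∀ u ∈ U, (rename (⇑u) E = E ↔ u ∈ N))
    (hEneg : ∀ u ∈ U, u ∉ N → rename (⇑u) E = -E) :
    ∃ H : Subgroup (Equiv.Perm (Fin d × Fin m)),
      H ≤ G ∧
      (∀ g : Equiv.Perm (Fin d × Fin m), g ∈ H ↔
        (g ∈ G ∧ rename (⇑g) (∏ j : Fin m, rename (fun i => (i, j)) E)
          = ∏ j : Fin m, rename (fun i => (i, j)) E)) ∧
      H.relIndex G = 2 :=
  statement10_general d m hm U V G hG N hNidx E hE hEneg
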